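/- arXiv:2004.12242 — 5 statements merged into one kernel-verified Lean document; each statement's English description precedes it below -/
import Mathlib

section
/- Consider the ODE system s_i'(t) = −(1/y_i) F(s(t)) x(t) for i = 1,…,n and x'(t) = (−D + F(s(t))) x(t). Every solution (s(t), x(t)) with initial condition (s(0), x(0)) in the open positive cone ℝ₊^{n+1} exists for all t ≥ 0, is bounded, and satisfies s_i(t) > 0 for all i = 1,…,n and x(t) > 0 for all t ≥ 0; moreover each s_i(t) is nonincreasing in t. -/
open Filter Set Topology

noncomputable section

/-- Hypotheses on the uptake function `F`: Lipschitz on the closed positive cone,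
vanishing when some nutrient is exhausted, positive on the open positive cone, and
strictly increasing in each argument on the positive cone. -/
def FHyp {n : ℕ} (F : (Fin n → ℝ) → ℝ) : Prop :=
  (∃ K : NNReal, LipschitzOnWith K F {s : Fin n → ℝ | ∀ i, 0 ≤ s i}) ∧
  (∀ s : Fin n → ℝ, (∀ i, 0 ≤ s i) → (∃ i, s i = 0) → F s = 0) ∧
  (∀ s : Fin n → ℝ, (∀ i, 0 < s i) → 0 < F s) ∧
  (∀ s : Fin n → ℝ, (∀ i, 0 < s i) → ∀ i : Fin n, ∀ ε : ℝ, 0 < ε →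
    F s < F (Function.update s i (s i + ε)))

/-- The component Lyapunov-like function `V_i(s) = y₁(s₁ⁱⁿ - s₁) - y_i(s_iⁱⁿ - s_i)`. -/
def Vfun {n : ℕ} [NeZero n] (y sIn : Fin n → ℝ) (i : Fin n) (s : Fin n → ℝ) : ℝ :=
  y 0 * (sIn 0 - s 0) - y i * (sIn i - s i)

/-- `V̄_i = y₁(s₁ⁱⁿ - s̄₁) - y_i s_iⁱⁿ`. -/
def Vbar {n : ℕ} [NeZero n] (y sIn : Fin n → ℝ) (sbar1 : ℝ) (i : Fin n) : ℝ :=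
  y 0 * (sIn 0 - sbar1) - y i * sIn i

/-- `Ω₀ = {s ∈ ℝⁿ₊ : s₁ ≥ s̄₁, V_i(s) < V̄_i for at least one i = 2,…,n}`. -/
def Omega0 {n : ℕ} [NeZero n] (y sIn : Fin n → ℝ) (sbar1 : ℝ) : Set (Fin n → ℝ) :=
  {s | (∀ i, 0 < s i) ∧ sbar1 ≤ s 0 ∧ ∃ i, i ≠ 0 ∧ Vfun y sIn i s < Vbar y sIn sbar1 i}

/-- `Ω₁ = {s ∈ ℝⁿ₊ : s₁ ≥ s̄₁, V_i(s) > V̄_i for all i = 2,…,n}`. -/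
def Omega1 {n : ℕ} [NeZero n] (y sIn : Fin n → ℝ) (sbar1 : ℝ) : Set (Fin n → ℝ) :=
  {s | (∀ i, 0 < s i) ∧ sbar1 ≤ s 0 ∧ ∀ i, i ≠ 0 → Vbar y sIn sbar1 i < Vfun y sIn i s}

/-- `φ_ν(s⁰) = s⁰ - ν y₁ (s₁⁰ - s̄₁) Y`, with `Y = (1/y₁, …, 1/yₙ)`. -/
def phiNu {n : ℕ} [NeZero n] (y : Fin n → ℝ) (sbar1 ν : ℝ) (s0 : Fin n → ℝ) : Fin n → ℝ :=
  fun i => s0 i - ν * (y 0 * (s0 0 - sbar1)) * (1 / y i)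

/-- `I(s⁰) = y₁ (s₁⁰ - s̄₁) ∫₀¹ (1 - D / F(φ_ν(s⁰))) dν`, the net biomass change over one cycle. -/
def Ifun {n : ℕ} [NeZero n] (F : (Fin n → ℝ) → ℝ) (D : ℝ) (y : Fin n → ℝ)
    (sbar1 : ℝ) (s0 : Fin n → ℝ) : ℝ :=
  y 0 * (s0 0 - sbar1) * ∫ ν in (0:ℝ)..1, (1 - D / F (phiNu y sbar1 ν s0))

/-- `ŝ⁺(r) = sⁱⁿ - (1 - r) y₁ (s₁ⁱⁿ - s̄₁) Y`. -/
def shatP {n : ℕ} [NeZero n] (y sIn : Fin n → ℝ) (sbar1 r : ℝ) : Fin n → ℝ :=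
  fun i => sIn i - (1 - r) * (y 0 * (sIn 0 - sbar1)) * (1 / y i)

/-- `μ(r) = y₁ (s̄₁⁺ - s̄₁) ∫₀¹ (1 - D / F(φ_ν(ŝ⁺(r)))) dν`, where `s̄₁⁺ = r s₁ⁱⁿ + (1-r) s̄₁`. -/
def muFun {n : ℕ} [NeZero n] (F : (Fin n → ℝ) → ℝ) (D : ℝ) (y sIn : Fin n → ℝ)
    (sbar1 r : ℝ) : ℝ :=
  y 0 * ((r * sIn 0 + (1 - r) * sbar1) - sbar1) *
    ∫ ν in (0:ℝ)..1, (1 - D / F (phiNu y sbar1 ν (shatP y sIn sbar1 r)))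

/-- `Γ_ρ⁺ = {s ∈ ℝⁿ₊ : s₁ = s̄₁⁺, V_i(s) > -ρ for all i = 2,…,n}`. -/
def GammaRho {n : ℕ} [NeZero n] (y sIn : Fin n → ℝ) (sbar1 r ρ : ℝ) : Set (Fin n → ℝ) :=
  {s | (∀ i, 0 < s i) ∧ s 0 = r * sIn 0 + (1 - r) * sbar1 ∧
    ∀ i, i ≠ 0 → -ρ < Vfun y sIn i s}

/-- `Ω^ρ = {s ∈ Ω₁ : V_i(s) > -ρ for all i = 2,…,n}`. -/
def OmegaRho {n : ℕ} [NeZero n] (y sIn : Fin n → ℝ) (sbar1 ρ : ℝ) : Set (Fin n → ℝ) :=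
  {s | s ∈ Omega1 y sIn sbar1 ∧ ∀ i, i ≠ 0 → -ρ < Vfun y sIn i s}

/-- The cycle map `s ↦ g(φ₁(s)) = r sⁱⁿ + (1 - r) φ₁(s)`. -/
def cycMap {n : ℕ} [NeZero n] (y sIn : Fin n → ℝ) (sbar1 r : ℝ)
    (s : Fin n → ℝ) : Fin n → ℝ :=
  fun i => r * sIn i + (1 - r) * phiNu y sbar1 1 s i

/-- A (right-continuous) solution of the impulsive self-cycling fermentation model
`eq:model`: between impulse times the ODEs hold, impulse times are exactly the times
where the left limit of `s₁` equals the threshold `s̄₁`, and at an impulse time the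
state jumps according to the decanting/refilling map. -/
structure SCFSol (n : ℕ) [NeZero n] (F : (Fin n → ℝ) → ℝ) (D : ℝ) (y : Fin n → ℝ)
    (r : ℝ) (sIn : Fin n → ℝ) (sbar1 : ℝ) where
  /-- nutrient concentrations -/
  s : ℝ → Fin n → ℝ
  /-- biomass concentration -/
  x : ℝ → ℝ
  /-- the set of impulse times -/
  T : Set ℝ
  /-- left limits of `s` (meaningful at impulse times) -/
  sLim : ℝ → Fin n → ℝ
  /-- left limit of `x` (meaningful at impulse times) -/
  xLim : ℝ → ℝ
  T_pos : ∀ t ∈ T, 0 < t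
  init : sbar1 < s 0 0
  ode_s : ∀ t : ℝ, 0 ≤ t → t ∉ T → ∀ i,
    HasDerivAt (fun τ => s τ i) (-(1 / y i) * F (s t) * x t) t
  ode_x : ∀ t : ℝ, 0 ≤ t → t ∉ T →
    HasDerivAt x ((-D + F (s t)) * x t) t
  left_s : ∀ t ∈ T, ∀ i,
    Filter.Tendsto (fun τ => s τ i) (nhdsWithin t (Set.Iio t)) (nhds (sLim t i))
  left_x : ∀ t ∈ T, Filter.Tendsto x (nhdsWithin t (Set.Iio t)) (nhds (xLim t))
  hit : ∀ t ∈ T, sLim t 0 = sbar1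
  exact_hit : ∀ t : ℝ, 0 < t → t ∉ T → s t 0 ≠ sbar1
  jump_s : ∀ t ∈ T, ∀ i, s t i = r * sIn i + (1 - r) * sLim t i
  jump_x : ∀ t ∈ T, x t = (1 - r) * xLim t

/-- Convergence of a solution to the unique periodic orbit: there are infinitely many
impulses and, along the (increasing) enumeration of the impulse times, the post-impulse
nutrient states converge to `ŝ⁺(r)`, the post-impulse biomass converges to
`((1-r)/r) μ(r)`, and the pre-impulse biomass converges to `(1/r) μ(r)`. -/
def ConvergesToPeriodic {n : ℕ} [NeZero n] {F : (Fin n → ℝ) → ℝ} {D : ℝ}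
    {y : Fin n → ℝ} {r : ℝ} {sIn : Fin n → ℝ} {sbar1 : ℝ}
    (sol : SCFSol n F D y r sIn sbar1) : Prop :=
  sol.T.Infinite ∧
  ∀ tk : ℕ → ℝ, StrictMono tk → Set.range tk = sol.T →
    (∀ i, Filter.Tendsto (fun k => sol.s (tk k) i) Filter.atTop
      (nhds (shatP y sIn sbar1 r i))) ∧
    Filter.Tendsto (fun k => sol.x (tk k)) Filter.atTop
      (nhds ((1 - r) / r * muFun F D y sIn sbar1 r)) ∧
    Filter.Tendsto (fun k => sol.xLim (tk k)) Filter.atTop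
      (nhds (1 / r * muFun F D y sIn sbar1 r))

/-!
Positivity is proved by continuous induction. As long as the state stays in the closed cone,
`F ≥ 0` gives `x' ≥ -D x`, while the Lipschitz bound `F s ≤ K s_i` (`F` vanishes on the face
`s_i = 0`) and the boundedness of `x` on `[0, T]` give `s_i' ≥ -c s_i`; by Grönwall neither can
reach `0` at the first exit time. Then `s_i' ≤ 0`, and `y₁ s₁ + x` is nonincreasing because its
derivative is `-D x`, which bounds `x`.
-/

lemma FHyp.nonneg {n : ℕ} {F : (Fin n → ℝ) → ℝ} (hF : FHyp F)
    {s : Fin n → ℝ} (hs : ∀ i, 0 ≤ s i) : 0 ≤ F s := by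
  by_cases h : ∀ i, 0 < s i
  · exact (hF.2.2.1 s h).le
  · obtain ⟨i, hi⟩ := not_forall.1 h
    exact (hF.2.1 s hs ⟨i, le_antisymm (not_lt.1 hi) (hs i)⟩).ge

/-- Compare `s` with its projection `Function.update s i 0` onto the face `{s i = 0}`. -/
lemma LipschitzOnWith.le_mul_apply_of_eq_zero {ι : Type*} [Fintype ι] [DecidableEq ι]
    {F : (ι → ℝ) → ℝ} {K : NNReal} (hK : LipschitzOnWith K F {s | ∀ i, 0 ≤ s i})
    (hzero : ∀ s : ι → ℝ, (∀ i, 0 ≤ s i) → (∃ i, s i = 0) → F s = 0)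
    {s : ι → ℝ} (hs : ∀ i, 0 ≤ s i) (i : ι) : F s ≤ K * s i := by
  have hface : ∀ j, 0 ≤ Function.update s i 0 j := by
    intro j
    rcases eq_or_ne j i with rfl | hj
    · simp
    · simpa [Function.update_of_ne hj] using hs j
  have hdist : dist s (Function.update s i 0) ≤ s i := by
    refine (dist_pi_le_iff (hs i)).2 fun j => ?_
    rcases eq_or_ne j i with rfl | hj
    · simp [abs_of_nonneg (hs j)]
    · simpa [Function.update_of_ne hj] using hs i
  calc F s = F s - F (Function.update s i 0) := by
        rw [hzero _ hface ⟨i, Function.update_self i 0 s⟩, sub_zero]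
    _ ≤ dist (F s) (F (Function.update s i 0)) := le_abs_self _
    _ ≤ K * dist s (Function.update s i 0) := hK.dist_le_mul s hs _ hface
    _ ≤ K * s i := mul_le_mul_of_nonneg_left hdist K.2

lemma pos_of_hasDerivAt_of_neg_mul_le {f f' : ℝ → ℝ} {c a b : ℝ} (hab : a ≤ b)
    (hf : ∀ t ∈ Icc a b, HasDerivAt f (f' t) t) (hbound : ∀ t ∈ Icc a b, -c * f t ≤ f' t)
    (ha : 0 < f a) : 0 < f b := by
  -- Grönwall applied to `-f`, which satisfies `(-f)' ≤ (-c) * (-f)`.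
  have hgronwall := le_gronwallBound_of_liminf_deriv_right_le (f := fun t => -f t)
    (f' := fun t => -f' t) (δ := -f a) (K := -c) (ε := 0)
    (fun t ht => (hf t ht).continuousAt.continuousWithinAt.neg)
    (fun t ht _ hr => (hf t (Ico_subset_Icc_self ht)).neg.hasDerivWithinAt.liminf_right_slope_le hr)
    le_rfl (fun t ht => by linarith [hbound t (Ico_subset_Icc_self ht)]) b ⟨hab, le_rfl⟩
  rw [gronwallBound_ε0] at hgronwall
  nlinarith [Real.exp_pos (-c * (b - a))]

lemma antitoneOn_Ici_of_hasDerivAt_nonpos {f f' : ℝ → ℝ} {a : ℝ}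
    (hf : ∀ t ∈ Ici a, HasDerivAt f (f' t) t) (hf' : ∀ t ∈ Ici a, f' t ≤ 0) :
    AntitoneOn f (Ici a) :=
  antitoneOn_of_hasDerivWithinAt_nonpos (convex_Ici a)
    (fun t ht => (hf t ht).continuousAt.continuousWithinAt)
    (fun t ht => (hf t (interior_subset ht)).hasDerivWithinAt)
    (fun t ht => hf' t (interior_subset ht))

lemma ContinuousOn.mapsTo_Ici_of_forall_mapsTo_Icc {X : Type*} [TopologicalSpace X]
    {γ : ℝ → X} {U C : Set X} {a : ℝ} (hγ : ContinuousOn γ (Ici a)) (hU : IsOpen U)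
    (hC : IsClosed C) (hUC : U ⊆ C) (ha : γ a ∈ U)
    (hstep : ∀ T, a < T → MapsTo γ (Icc a T) C → γ T ∈ U) : MapsTo γ (Ici a) U := by
  intro T hT
  by_contra hTU
  have hZ : IsCompact (Icc a T ∩ γ ⁻¹' Uᶜ) :=
    isCompact_Icc.of_isClosed_subset ((hγ.mono Icc_subset_Ici_self).preimage_isClosed_of_isClosed
      isClosed_Icc hU.isClosed_compl) inter_subset_left
  obtain ⟨t₀, ⟨⟨ht₀a, ht₀T⟩, ht₀U⟩, hleast⟩ := hZ.exists_isLeast ⟨T, ⟨hT, le_rfl⟩, hTU⟩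
  have hbefore : MapsTo γ (Ico a t₀) U := fun t ht => by
    by_contra htU
    exact (hleast ⟨⟨ht.1, ht.2.le.trans ht₀T⟩, htU⟩).not_gt ht.2
  have hat₀ : a < t₀ := ht₀a.lt_of_ne fun h => ht₀U (h ▸ ha)
  have ht₀C : γ t₀ ∈ C := by
    rw [← hC.closure_eq]
    refine ((hγ t₀ ht₀a).mono Ico_subset_Ici_self).mem_closure ?_ (hbefore.mono_right hUC)
    rw [closure_Ico hat₀.ne]
    exact ⟨hat₀.le, le_rfl⟩
  refine ht₀U (hstep t₀ hat₀ fun t ht => ?_)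
  rcases ht.2.eq_or_lt with rfl | hlt
  · exact ht₀C
  · exact hUC (hbefore ⟨ht.1, hlt⟩)

section ChemostatODE

variable {n : ℕ} {F : (Fin n → ℝ) → ℝ} {D : ℝ} {y : Fin n → ℝ} {s : ℝ → Fin n → ℝ} {x : ℝ → ℝ}

lemma pos_of_nonneg_on_Icc (hF : FHyp F) (hy : ∀ i, 0 < y i)
    (hode_s : ∀ t : ℝ, 0 ≤ t → ∀ i,
      HasDerivAt (fun τ => s τ i) (-(1 / y i) * F (s t) * x t) t)
    (hode_x : ∀ t : ℝ, 0 ≤ t → HasDerivAt x ((-D + F (s t)) * x t) t)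
    (hinit : (∀ i, 0 < s 0 i) ∧ 0 < x 0) {T : ℝ} (hT : 0 ≤ T)
    (hnonneg : ∀ t ∈ Icc 0 T, (∀ i, 0 ≤ s t i) ∧ 0 ≤ x t) :
    (∀ i, 0 < s T i) ∧ 0 < x T := by
  obtain ⟨K, hK⟩ := hF.1
  obtain ⟨B, hB⟩ := isCompact_Icc.bddAbove_image (f := x) fun t ht =>
    (hode_x t ht.1).continuousAt.continuousWithinAt
  refine ⟨fun i => ?_, ?_⟩
  · refine pos_of_hasDerivAt_of_neg_mul_le (c := K * B / y i) hT
      (fun t ht => hode_s t ht.1 i) (fun t ht => ?_) (hinit.1 i)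
    have hFK : F (s t) * x t ≤ K * s t i * B :=
      mul_le_mul (hK.le_mul_apply_of_eq_zero hF.2.1 (hnonneg t ht).1 i)
        (hB (mem_image_of_mem x ht)) (hnonneg t ht).2 (mul_nonneg K.2 ((hnonneg t ht).1 i))
    calc -(K * B / y i) * s t i = -(1 / y i) * (K * s t i * B) := by ring
      _ ≤ -(1 / y i) * (F (s t) * x t) :=
        mul_le_mul_of_nonpos_left hFK (neg_nonpos.2 (one_div_pos.2 (hy i)).le)
      _ = -(1 / y i) * F (s t) * x t := by ring
  · refine pos_of_hasDerivAt_of_neg_mul_le (c := D) hT (fun t ht => hode_x t ht.1)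
      (fun t ht => ?_) hinit.2
    linarith [mul_nonneg (hF.nonneg (hnonneg t ht).1) (hnonneg t ht).2]

lemma pos_on_Ici (hF : FHyp F) (hy : ∀ i, 0 < y i)
    (hode_s : ∀ t : ℝ, 0 ≤ t → ∀ i,
      HasDerivAt (fun τ => s τ i) (-(1 / y i) * F (s t) * x t) t)
    (hode_x : ∀ t : ℝ, 0 ≤ t → HasDerivAt x ((-D + F (s t)) * x t) t)
    (hinit : (∀ i, 0 < s 0 i) ∧ 0 < x 0) :
    ∀ t : ℝ, 0 ≤ t → (∀ i, 0 < s t i) ∧ 0 < x t := by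
  have hcont : ContinuousOn (fun t => (s t, x t)) (Ici 0) := fun t ht =>
    ((continuousAt_pi.2 fun i => (hode_s t ht i).continuousAt).prodMk
      (hode_x t ht).continuousAt).continuousWithinAt
  have hmaps := hcont.mapsTo_Ici_of_forall_mapsTo_Icc
    (U := (univ.pi fun _ => Ioi 0) ×ˢ Ioi 0) (C := (univ.pi fun _ => Ici 0) ×ˢ Ici 0)
    ((isOpen_set_pi finite_univ fun _ _ => isOpen_Ioi).prod isOpen_Ioi)
    ((isClosed_set_pi fun _ _ => isClosed_Ici).prod isClosed_Ici)
    (prod_mono (pi_mono fun _ _ => Ioi_subset_Ici_self) Ioi_subset_Ici_self)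
    (by simpa using hinit)
    (fun T hT hC => by
      simpa using pos_of_nonneg_on_Icc hF hy hode_s hode_x hinit hT.le
        (fun t ht => by simpa [Pi.le_def] using hC ht))
  exact fun t ht => by simpa using hmaps ht

lemma antitoneOn_yield_mul_add [NeZero n] (hD : 0 ≤ D) (hy0 : y 0 ≠ 0)
    (hode_s : ∀ t : ℝ, 0 ≤ t → ∀ i,
      HasDerivAt (fun τ => s τ i) (-(1 / y i) * F (s t) * x t) t)
    (hode_x : ∀ t : ℝ, 0 ≤ t → HasDerivAt x ((-D + F (s t)) * x t) t)
    (hx : ∀ t, 0 ≤ t → 0 ≤ x t) :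
    AntitoneOn (fun t => y 0 * s t 0 + x t) (Ici 0) := by
  refine antitoneOn_Ici_of_hasDerivAt_nonpos
    (fun t ht => ((hode_s t ht 0).const_mul (y 0)).add (hode_x t ht)) fun t ht => ?_
  calc y 0 * (-(1 / y 0) * F (s t) * x t) + (-D + F (s t)) * x t = -D * x t := by
        field_simp
        ring
    _ ≤ 0 := mul_nonpos_of_nonpos_of_nonneg (neg_nonpos.2 hD) (hx t ht)

end ChemostatODE

/-- Lemma 2.1, first part: every (globally defined) solution of the
limiting ODE system with initial condition in the open positive cone is bounded, remains
in the open positive cone for all `t ≥ 0`, and each nutrient concentration `s_i` is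
nonincreasing on `[0, ∞)`. -/
theorem scf_ode_wellPosed {n : ℕ} [NeZero n] (F : (Fin n → ℝ) → ℝ) (hF : FHyp F)
    (D : ℝ) (hD : 0 < D) (y : Fin n → ℝ) (hy : ∀ i, 0 < y i)
    (s : ℝ → Fin n → ℝ) (x : ℝ → ℝ)
    (hode_s : ∀ t : ℝ, 0 ≤ t → ∀ i,
      HasDerivAt (fun τ => s τ i) (-(1 / y i) * F (s t) * x t) t)
    (hode_x : ∀ t : ℝ, 0 ≤ t → HasDerivAt x ((-D + F (s t)) * x t) t)
    (hinit : (∀ i, 0 < s 0 i) ∧ 0 < x 0) :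
    (∃ C : ℝ, ∀ t : ℝ, 0 ≤ t → |x t| ≤ C ∧ ∀ i, |s t i| ≤ C) ∧
    (∀ t : ℝ, 0 ≤ t → (∀ i, 0 < s t i) ∧ 0 < x t) ∧
    (∀ i, AntitoneOn (fun t => s t i) (Set.Ici (0:ℝ))) := by
  have hpos := pos_on_Ici hF hy hode_s hode_x hinit
  have hanti : ∀ i, AntitoneOn (fun t => s t i) (Ici 0) := fun i =>
    antitoneOn_Ici_of_hasDerivAt_nonpos (fun t ht => hode_s t ht i) fun t ht => by
      have := mul_nonneg (mul_nonneg (one_div_pos.2 (hy i)).le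
        (hF.nonneg fun j => ((hpos t ht).1 j).le)) (hpos t ht).2.le
      linarith
  have hmass := antitoneOn_yield_mul_add hD.le (hy 0).ne' hode_s hode_x fun t ht => (hpos t ht).2.le
  refine ⟨⟨y 0 * s 0 0 + x 0 + ∑ i, s 0 i, fun t ht => ⟨?_, fun i => ?_⟩⟩, hpos, hanti⟩
  · have hWt : y 0 * s t 0 + x t ≤ y 0 * s 0 0 + x 0 := hmass self_mem_Ici ht ht
    have hsum : 0 ≤ ∑ i, s 0 i := Finset.sum_nonneg fun i _ => (hinit.1 i).le
    rw [abs_of_pos (hpos t ht).2]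
    linarith [mul_pos (hy 0) ((hpos t ht).1 0)]
  · have hsi : s t i ≤ s 0 i := hanti i self_mem_Ici ht ht
    have hsum := Finset.single_le_sum (fun j _ => (hinit.1 j).le) (Finset.mem_univ i)
    rw [abs_of_pos ((hpos t ht).1 i)]
    linarith [mul_pos (hy 0) (hinit.1 0), hinit.2]

end
end

section
/- Consider the ODE system s_i'(t) = −(1/y_i) F(s(t)) x(t) for i = 1,…,n and x'(t) = (−D + F(s(t))) x(t) with initial condition (s(0), x(0)) in the open positive cone ℝ₊^{n+1} and x(0) > 0. Then there exists t_* ≥ 0 such that F(s(t)) < D for all t ≥ t_*. (In particular x'(t) < 0 for all t ≥ t_*, so x decays at least exponentially after time t_*.) -/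
/-!
While the state is positive, `x' ≥ -D x`, the mass `y₀ s₀ + x` (whose derivative is `-D x`)
bounds `x`, and the Lipschitz bound `F(s) ≤ K sᵢ` gives `sᵢ' ≥ -c sᵢ`; so the solution never
leaves the open positive cone. The nutrients then decrease to a limit `σ` and `F(s(t)) → F(σ)`.
If `F(σ) ≥ D`, monotonicity of `F` gives `F(s(t)) ≥ D` for all `t`, hence `x ≥ x(0)`, and the
mass would decrease at least linearly, contradicting positivity. So `F(s(t)) < D` eventually,
and since `F(s(t))` is decreasing, `x' ≤ (-D + F(s(t⋆))) x` after `t⋆` gives the exponential bound.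
-/

open Filter Set Topology

noncomputable section

theorem Convex.antitoneOn_of_hasDerivAt_nonpos {D : Set ℝ} (hD : Convex ℝ D) {f f' : ℝ → ℝ}
    (hf : ∀ t ∈ D, HasDerivAt f (f' t) t) (hf' : ∀ t ∈ interior D, f' t ≤ 0) :
    AntitoneOn f D :=
  antitoneOn_of_hasDerivWithinAt_nonpos hD (fun t ht => (hf t ht).continuousAt.continuousWithinAt)
    (fun t ht => (hf t (interior_subset ht)).hasDerivWithinAt) hf'

theorem sub_le_mul_sub_of_deriv_le {u u' : ℝ → ℝ} {a b m : ℝ} (hab : a ≤ b)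
    (hu : ∀ t ∈ Icc a b, HasDerivAt u (u' t) t) (hle : ∀ t ∈ Ioo a b, u' t ≤ m) :
    u b - u a ≤ m * (b - a) := by
  have hanti : AntitoneOn (fun t => u t - m * t) (Icc a b) :=
    (convex_Icc a b).antitoneOn_of_hasDerivAt_nonpos
      (fun t ht => by
        simpa using (hu t ht).fun_sub ((hasDerivAt_id' t).const_mul m))
      (fun t ht => by rw [interior_Icc] at ht; linarith [hle t ht])
  have := hanti (left_mem_Icc.2 hab) (right_mem_Icc.2 hab) hab
  linarith

theorem le_mul_exp_of_deriv_le_mul {u u' : ℝ → ℝ} {a b c : ℝ} (hab : a ≤ b)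
    (hu : ∀ t ∈ Icc a b, HasDerivAt u (u' t) t) (hle : ∀ t ∈ Ioo a b, u' t ≤ c * u t) :
    u b ≤ u a * Real.exp (c * (b - a)) := by
  have hanti : AntitoneOn (fun t => u t * Real.exp (-(c * t))) (Icc a b) := by
    refine (convex_Icc a b).antitoneOn_of_hasDerivAt_nonpos
      (f' := fun t => (u' t - c * u t) * Real.exp (-(c * t))) (fun t ht => ?_) (fun t ht => ?_)
    · exact ((hu t ht).mul ((hasDerivAt_id' t).const_mul c).fun_neg.exp).congr_deriv (by ring)
    · rw [interior_Icc] at ht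
      exact mul_nonpos_of_nonpos_of_nonneg (by linarith [hle t ht]) (Real.exp_pos _).le
  have h := hanti (left_mem_Icc.2 hab) (right_mem_Icc.2 hab) hab
  calc u b = u b * Real.exp (-(c * b)) * Real.exp (c * b) := by
        rw [mul_assoc, ← Real.exp_add, neg_add_cancel, Real.exp_zero, mul_one]
    _ ≤ u a * Real.exp (-(c * a)) * Real.exp (c * b) := by gcongr
    _ = u a * Real.exp (c * (b - a)) := by
        rw [mul_assoc, ← Real.exp_add]; ring_nf

theorem mul_exp_le_of_mul_le_deriv {u u' : ℝ → ℝ} {a b c : ℝ} (hab : a ≤ b)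
    (hu : ∀ t ∈ Icc a b, HasDerivAt u (u' t) t) (hle : ∀ t ∈ Ioo a b, c * u t ≤ u' t) :
    u a * Real.exp (c * (b - a)) ≤ u b := by
  have := le_mul_exp_of_deriv_le_mul (c := c) (u := fun t => -u t) (u' := fun t => -u' t) hab
    (fun t ht => (hu t ht).neg) (fun t ht => by linarith [hle t ht])
  linarith

theorem forall_ge_of_eventually_of_forall_Ico {P : ℝ → Prop} {a : ℝ}
    (hopen : ∀ t, a ≤ t → P t → ∀ᶠ τ in 𝓝 t, P τ)
    (hstep : ∀ T, a ≤ T → (∀ τ ∈ Ico a T, P τ) → P T) : ∀ t, a ≤ t → P t := by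
  by_contra! hbad
  set bad := {t | a ≤ t ∧ ¬P t}
  have hne : bad.Nonempty := hbad
  have hbdd : BddBelow bad := ⟨a, fun t ht => ht.1⟩
  have haT : a ≤ sInf bad := le_csInf hne fun t ht => ht.1
  have hT : P (sInf bad) := hstep _ haT fun τ hτ => by
    by_contra hP
    exact (csInf_le hbdd ⟨hτ.1, hP⟩).not_gt hτ.2
  obtain ⟨ε, hε, hball⟩ := Metric.eventually_nhds_iff.1 (hopen _ haT hT)
  obtain ⟨b, hb, hbε⟩ := (csInf_lt_iff hbdd hne).1 (lt_add_of_pos_right (sInf bad) hε)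
  have hTb : sInf bad ≤ b := csInf_le hbdd hb
  exact hb.2 (hball (by rw [Real.dist_eq, abs_of_nonneg (by linarith)]; linarith))

theorem AntitoneOn.exists_tendsto_atTop {f : ℝ → ℝ} {a m : ℝ} (hf : AntitoneOn f (Ici a))
    (hm : ∀ t ∈ Ici a, m ≤ f t) :
    ∃ L, m ≤ L ∧ (∀ t ∈ Ici a, L ≤ f t) ∧ Tendsto f atTop (𝓝 L) := by
  set g : ℝ → ℝ := fun t => f (max t a)
  have hg : Antitone g := fun t τ htτ =>
    hf (le_max_right t a) (le_max_right τ a) (max_le_max htτ le_rfl)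
  have hbdd : BddBelow (range g) := ⟨m, by rintro _ ⟨t, rfl⟩; exact hm _ (le_max_right t a)⟩
  have hgf : ∀ t ∈ Ici a, g t = f t := fun t ht => by simp only [g, max_eq_left (mem_Ici.1 ht)]
  refine ⟨⨅ t, g t, le_ciInf fun t => hm _ (le_max_right t a),
    fun t ht => hgf t ht ▸ ciInf_le hbdd t, ?_⟩
  exact (tendsto_atTop_ciInf hg hbdd).congr' <|
    (eventually_ge_atTop a).mono fun t ht => hgf t ht

namespace FHyp

variable {n : ℕ} {F : (Fin n → ℝ) → ℝ}

theorem nonneg_s2 (hF : FHyp F) {a : Fin n → ℝ} (ha : ∀ i, 0 ≤ a i) : 0 ≤ F a := by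
  by_cases hpos : ∀ i, 0 < a i
  · exact (hF.2.2.1 a hpos).le
  · obtain ⟨i, hi⟩ := not_forall.1 hpos
    exact (hF.2.1 a ha ⟨i, le_antisymm (not_lt.1 hi) (ha i)⟩).ge

theorem le_mul_apply (hF : FHyp F) {K : NNReal}
    (hK : LipschitzOnWith K F {s : Fin n → ℝ | ∀ i, 0 ≤ s i})
    {a : Fin n → ℝ} (ha : ∀ i, 0 ≤ a i) (i : Fin n) : F a ≤ K * a i := by
  set b := Function.update a i 0
  have hb : ∀ j, 0 ≤ b j := fun j => by
    rcases eq_or_ne j i with rfl | h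
    · simp [b]
    · simpa [b, Function.update_of_ne h] using ha j
  have hFb : F b = 0 := hF.2.1 b hb ⟨i, by simp [b]⟩
  have hdist : dist a b ≤ a i := by
    refine (dist_pi_le_iff (ha i)).2 fun j => ?_
    rcases eq_or_ne j i with rfl | h
    · simp [b, abs_of_nonneg (ha j)]
    · simpa [b, Function.update_of_ne h] using ha i
  calc F a ≤ dist (F a) (F b) := by rw [hFb, Real.dist_eq, sub_zero]; exact le_abs_self _
    _ ≤ K * dist a b := hK.dist_le_mul a ha b hb
    _ ≤ K * a i := by gcongr

theorem le_update (hF : FHyp F) {a : Fin n → ℝ} (ha : ∀ i, 0 < a i) (i : Fin n) {v : ℝ}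
    (hv : a i ≤ v) : F a ≤ F (Function.update a i v) := by
  rcases hv.eq_or_lt with rfl | hlt
  · rw [Function.update_eq_self]
  · simpa using (hF.2.2.2 a ha i (v - a i) (sub_pos.2 hlt)).le

theorem mono (hF : FHyp F) {a b : Fin n → ℝ} (ha : ∀ i, 0 < a i) (hab : a ≤ b) :
    F a ≤ F b := by
  suffices h : ∀ A : Finset (Fin n), F a ≤ F (A.piecewise b a) by
    simpa using h Finset.univ
  intro A
  induction A using Finset.induction_on with
  | empty => simp
  | insert j A hj ih =>
    have hle : a ≤ A.piecewise b a := Finset.le_piecewise_of_le_of_le _ hab le_rfl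
    rw [Finset.piecewise_insert]
    refine ih.trans (hF.le_update (fun i => (ha i).trans_le (hle i)) j ?_)
    rw [Finset.piecewise_eq_of_notMem _ _ _ hj]
    exact hab j

end FHyp

structure IsBatchSolution {n : ℕ} (F : (Fin n → ℝ) → ℝ) (D : ℝ) (y : Fin n → ℝ)
    (s : ℝ → Fin n → ℝ) (x : ℝ → ℝ) : Prop where
  hasDerivAt_s : ∀ t : ℝ, 0 ≤ t → ∀ i,
    HasDerivAt (fun τ => s τ i) (-(1 / y i) * F (s t) * x t) t
  hasDerivAt_x : ∀ t : ℝ, 0 ≤ t → HasDerivAt x ((-D + F (s t)) * x t) t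

namespace IsBatchSolution

variable {n : ℕ} {F : (Fin n → ℝ) → ℝ} {D : ℝ} {y : Fin n → ℝ}
  {s : ℝ → Fin n → ℝ} {x : ℝ → ℝ}

theorem eventually_pos (h : IsBatchSolution F D y s x) {t : ℝ} (ht : 0 ≤ t)
    (hpos : (∀ i, 0 < s t i) ∧ 0 < x t) : ∀ᶠ τ in 𝓝 t, (∀ i, 0 < s τ i) ∧ 0 < x τ :=
  (eventually_all.2 fun i => (h.hasDerivAt_s t ht i).continuousAt.eventually
    (eventually_gt_nhds (hpos.1 i))).and
    ((h.hasDerivAt_x t ht).continuousAt.eventually (eventually_gt_nhds hpos.2))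

theorem antitoneOn_s (h : IsBatchSolution F D y s x) (hF : FHyp F) (hy : ∀ i, 0 < y i)
    (hpos : ∀ t, 0 ≤ t → (∀ i, 0 < s t i) ∧ 0 < x t) (i : Fin n) :
    AntitoneOn (fun t => s t i) (Ici 0) :=
  (convex_Ici 0).antitoneOn_of_hasDerivAt_nonpos (fun t ht => h.hasDerivAt_s t ht i)
    fun t ht => by
      rw [interior_Ici] at ht
      obtain ⟨hst, hxt⟩ := hpos t ht.le
      have := mul_nonneg (mul_nonneg (one_div_pos.2 (hy i)).le (hF.nonneg_s2 fun j => (hst j).le))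
        hxt.le
      linarith

theorem exists_tendsto_F (h : IsBatchSolution F D y s x) (hF : FHyp F) (hy : ∀ i, 0 < y i)
    (hpos : ∀ t, 0 ≤ t → (∀ i, 0 < s t i) ∧ 0 < x t) :
    ∃ σ : Fin n → ℝ, (∀ i, 0 ≤ σ i) ∧ (∀ t, 0 ≤ t → σ ≤ s t) ∧
      Tendsto (fun t => F (s t)) atTop (𝓝 (F σ)) := by
  have hlim := fun i => (h.antitoneOn_s hF hy hpos i).exists_tendsto_atTop
    fun t ht => ((hpos t ht).1 i).le
  choose σ hσ_nonneg hσ_le hσ_tendsto using hlim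
  obtain ⟨K, hK⟩ := hF.1
  refine ⟨σ, hσ_nonneg, fun t ht i => hσ_le i t ht, ?_⟩
  refine (hK.continuousOn σ hσ_nonneg).tendsto.comp (tendsto_nhdsWithin_iff.2
    ⟨tendsto_pi_nhds.2 hσ_tendsto, ?_⟩)
  filter_upwards [eventually_ge_atTop 0] with t ht
  exact fun i => ((hpos t ht).1 i).le

variable [NeZero n]

theorem hasDerivAt_mass (h : IsBatchSolution F D y s x) (hy : y 0 ≠ 0) {t : ℝ} (ht : 0 ≤ t) :
    HasDerivAt (fun τ => y 0 * s τ 0 + x τ) (-D * x t) t :=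
  (((h.hasDerivAt_s t ht 0).const_mul (y 0)).add (h.hasDerivAt_x t ht)).congr_deriv
    (by field_simp; ring)

theorem pos_of_forall_Ico (h : IsBatchSolution F D y s x) (hF : FHyp F) (hD : 0 ≤ D)
    (hy : ∀ i, 0 < y i) (h0 : ∀ i, 0 < s 0 i) (hx0 : 0 < x 0) {T : ℝ} (hT : 0 ≤ T)
    (hpos : ∀ τ ∈ Ico 0 T, (∀ i, 0 < s τ i) ∧ 0 < x τ) : (∀ i, 0 < s T i) ∧ 0 < x T := by
  have hpos' : ∀ τ ∈ Ioo 0 T, (∀ i, 0 < s τ i) ∧ 0 < x τ :=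
    fun τ hτ => hpos τ (Ioo_subset_Ico_self hτ)
  have hF_nonneg : ∀ τ ∈ Ioo 0 T, 0 ≤ F (s τ) :=
    fun τ hτ => hF.nonneg_s2 fun i => ((hpos' τ hτ).1 i).le
  obtain ⟨K, hK⟩ := hF.1
  set X := y 0 * s 0 0 + x 0
  have hmass : AntitoneOn (fun τ => y 0 * s τ 0 + x τ) (Icc 0 T) :=
    (convex_Icc 0 T).antitoneOn_of_hasDerivAt_nonpos (fun τ hτ => h.hasDerivAt_mass (hy 0).ne' hτ.1)
      fun τ hτ => by
        rw [interior_Icc] at hτ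
        nlinarith [(hpos' τ hτ).2]
  have hxX : ∀ τ ∈ Ioo 0 T, x τ ≤ X := fun τ hτ => by
    have := hmass (left_mem_Icc.2 hT) (Ioo_subset_Icc_self hτ) hτ.1.le
    nlinarith [(hpos' τ hτ).1 0, hy 0]
  refine ⟨fun i => ?_, ?_⟩
  · refine (mul_pos (h0 i) (Real.exp_pos _)).trans_le <|
      mul_exp_le_of_mul_le_deriv (c := -(K * X / y i)) hT
        (fun τ hτ => h.hasDerivAt_s τ hτ.1 i) fun τ hτ => ?_
    obtain ⟨hsτ, hxτ⟩ := hpos' τ hτ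
    have hFx : F (s τ) * x τ ≤ K * s τ i * X :=
      mul_le_mul (hF.le_mul_apply hK (fun j => (hsτ j).le) i) (hxX τ hτ) hxτ.le
        (mul_nonneg K.2 (hsτ i).le)
    calc -(K * X / y i) * s τ i = -(1 / y i) * (K * s τ i * X) := by ring
      _ ≤ -(1 / y i) * (F (s τ) * x τ) :=
        mul_le_mul_of_nonpos_left hFx (by simpa using (hy i).le)
      _ = -(1 / y i) * F (s τ) * x τ := by ring
  · refine (mul_pos hx0 (Real.exp_pos _)).trans_le <|
      mul_exp_le_of_mul_le_deriv (c := -D) hT (fun τ hτ => h.hasDerivAt_x τ hτ.1)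
        fun τ hτ => by nlinarith [hF_nonneg τ hτ, (hpos' τ hτ).2]

theorem pos (h : IsBatchSolution F D y s x) (hF : FHyp F) (hD : 0 ≤ D) (hy : ∀ i, 0 < y i)
    (h0 : ∀ i, 0 < s 0 i) (hx0 : 0 < x 0) {t : ℝ} (ht : 0 ≤ t) :
    (∀ i, 0 < s t i) ∧ 0 < x t :=
  forall_ge_of_eventually_of_forall_Ico (fun _ => h.eventually_pos)
    (fun _ => h.pos_of_forall_Ico hF hD hy h0 hx0) t ht

theorem eventually_F_lt (h : IsBatchSolution F D y s x) (hF : FHyp F) (hD : 0 < D)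
    (hy : ∀ i, 0 < y i) (hpos : ∀ t, 0 ≤ t → (∀ i, 0 < s t i) ∧ 0 < x t) :
    ∀ᶠ t in atTop, F (s t) < D := by
  obtain ⟨h0, hx0⟩ := hpos 0 le_rfl
  obtain ⟨σ, hσ_nonneg, hσ_le, hσ_tendsto⟩ := h.exists_tendsto_F hF hy hpos
  refine hσ_tendsto.eventually (eventually_lt_nhds ?_)
  by_contra! hDσ
  have hσ_pos : ∀ i, 0 < σ i := fun i => (hσ_nonneg i).lt_of_ne fun hi => by
    linarith [hF.2.1 σ hσ_nonneg ⟨i, hi.symm⟩]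
  have hx_ge : ∀ t, 0 ≤ t → x 0 ≤ x t := fun t ht => by
    have := mul_exp_le_of_mul_le_deriv (c := 0) ht (fun τ hτ => h.hasDerivAt_x τ hτ.1)
      fun τ hτ => by
        have := hDσ.trans (hF.mono hσ_pos (hσ_le τ hτ.1.le))
        nlinarith [(hpos τ hτ.1.le).2]
    simpa using this
  set t := (y 0 * s 0 0 + x 0) / (D * x 0)
  have ht : 0 ≤ t := by have := h0 0; have := hy 0; positivity
  have hmass := sub_le_mul_sub_of_deriv_le (m := -D * x 0) ht
    (fun τ hτ => h.hasDerivAt_mass (hy 0).ne' hτ.1) fun τ hτ => by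
      nlinarith [hx_ge τ hτ.1.le]
  have hDt : D * x 0 * t = y 0 * s 0 0 + x 0 := mul_div_cancel₀ _ (by positivity)
  nlinarith [(hpos t ht).1 0, (hpos t ht).2, hy 0]

end IsBatchSolution

/-- for solutions of the limiting ODE system with positive initial
conditions there is a time `t⋆ ≥ 0` after which `F(s(t)) < D`; in particular the biomass
decays at least exponentially after time `t⋆`. -/
theorem scf_ode_eventually_decay {n : ℕ} [NeZero n] (F : (Fin n → ℝ) → ℝ) (hF : FHyp F)
    (D : ℝ) (hD : 0 < D) (y : Fin n → ℝ) (hy : ∀ i, 0 < y i)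
    (s : ℝ → Fin n → ℝ) (x : ℝ → ℝ)
    (hode_s : ∀ t : ℝ, 0 ≤ t → ∀ i,
      HasDerivAt (fun τ => s τ i) (-(1 / y i) * F (s t) * x t) t)
    (hode_x : ∀ t : ℝ, 0 ≤ t → HasDerivAt x ((-D + F (s t)) * x t) t)
    (hinit : (∀ i, 0 < s 0 i) ∧ 0 < x 0) :
    ∃ tstar : ℝ, 0 ≤ tstar ∧ (∀ t : ℝ, tstar ≤ t → F (s t) < D) ∧
      (∀ t : ℝ, tstar ≤ t → x t ≤ x tstar * Real.exp ((-D + F (s tstar)) * (t - tstar))) := by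
  have h : IsBatchSolution F D y s x := ⟨hode_s, hode_x⟩
  have hpos := fun t (ht : 0 ≤ t) => h.pos hF hD.le hy hinit.1 hinit.2 ht
  obtain ⟨a, ha⟩ := eventually_atTop.1 (h.eventually_F_lt hF hD hy hpos)
  have htstar : 0 ≤ max a 0 := le_max_right a 0
  refine ⟨max a 0, htstar, fun t ht => ha t ((le_max_left a 0).trans ht), fun t ht => ?_⟩
  refine le_mul_exp_of_deriv_le_mul ht (fun τ hτ => hode_x τ (htstar.trans hτ.1)) fun τ hτ => ?_
  have hτ0 : 0 ≤ τ := htstar.trans hτ.1.le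
  obtain ⟨hsτ, hxτ⟩ := hpos τ hτ0
  have hF_le : F (s τ) ≤ F (s (max a 0)) :=
    hF.mono hsτ fun i => h.antitoneOn_s hF hy hpos i htstar hτ0 hτ.1.le
  exact mul_le_mul_of_nonneg_right (by linarith) hxτ.le

end
end

section
/- If (s(t), x(t)) is a solution of the impulsive SCF model in ℝ₊^{n+1} whose initial nutrient vector satisfies s(0) ∈ Ω₀, then the solution has no impulses, i.e., s₁(t) > s̄₁ for all t ≥ 0. -/
open Filter Set Topology

noncomputable section

/-!
Between impulses each `V_i` is a first integral of the flow. In the left limit at the first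
impulse `s₁ = s̄₁` and `s_i ≥ 0`, which forces `V_i ≥ V̄_i`; so if `V_i(s(0)) < V̄_i` there is
no first impulse. Nor can there be impulses without a first one: impulse times cannot
accumulate at a time where `s₁` is continuous and different from `s̄₁`. Without impulses
`s₁` is continuous and never equals `s̄₁`, so it stays above `s̄₁`.
-/

theorem eq_of_hasDerivAt_zero_of_mem_Ico {E : Type*} [NormedAddCommGroup E] [NormedSpace ℝ E]
    {f : ℝ → E} {a b : ℝ} (hf : ∀ x ∈ Ico a b, HasDerivAt f 0 x) :
    ∀ x ∈ Ico a b, f x = f a := fun x hx =>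
  constant_of_has_deriv_right_zero (b := x)
    (fun τ hτ => (hf τ ⟨hτ.1, hτ.2.trans_lt hx.2⟩).continuousAt.continuousWithinAt)
    (fun τ hτ => (hf τ ⟨hτ.1, hτ.2.trans hx.2⟩).hasDerivWithinAt) x ⟨hx.1, le_rfl⟩

theorem ContinuousAt.eq_of_mem_closure_of_mapClusterPt {X Y : Type*} [TopologicalSpace X]
    [TopologicalSpace Y] [T2Space Y] {f : X → Y} {x₀ : X} {c : Y} {T : Set X}
    (hf : ContinuousAt f x₀) (hx₀ : x₀ ∈ closure T) (hT : ∀ t ∈ T, MapClusterPt c (𝓝 t) f) :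
    f x₀ = c := by
  by_contra hne
  obtain ⟨u, v, hu, hv, hxu, hcv, huv⟩ := t2_separation hne
  obtain ⟨t, htO, htT⟩ :=
    mem_closure_iff_nhds.1 hx₀ _ (interior_mem_nhds.2 (hf (hu.mem_nhds hxu)))
  obtain ⟨τ, hτv, hτu⟩ := ((hT t htT).frequently (hv.mem_nhds hcv)).and_eventually
    (isOpen_interior.mem_nhds htO) |>.exists
  exact huv.ne_of_mem (interior_subset (s := f ⁻¹' u) hτu) hτv rfl

theorem Vbar_le_Vfun_of_eq_sbar1 {n : ℕ} [NeZero n] {y sIn s : Fin n → ℝ} {sbar1 : ℝ}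
    {i : Fin n} (hyi : 0 ≤ y i) (hs0 : s 0 = sbar1) (hsi : 0 ≤ s i) :
    Vbar y sIn sbar1 i ≤ Vfun y sIn i s := by
  have := mul_nonneg hyi hsi
  rw [Vbar, Vfun, hs0]
  linarith

namespace SCFSol

variable {n : ℕ} [NeZero n] {F : (Fin n → ℝ) → ℝ} {D : ℝ} {y : Fin n → ℝ} {r : ℝ}
  {sIn : Fin n → ℝ} {sbar1 : ℝ} (sol : SCFSol n F D y r sIn sbar1) {t t₀ : ℝ} {i : Fin n}

theorem bddBelow_T : BddBelow sol.T :=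
  ⟨0, fun t ht => (sol.T_pos t ht).le⟩

theorem continuousAt_s (ht : 0 ≤ t) (hT : t ∉ sol.T) (i : Fin n) :
    ContinuousAt (fun τ => sol.s τ i) t :=
  (sol.ode_s t ht hT i).continuousAt

theorem s_ne_sbar1 (ht : 0 ≤ t) (hT : t ∉ sol.T) : sol.s t 0 ≠ sbar1 := by
  rcases ht.eq_or_lt with rfl | ht
  · exact sol.init.ne'
  · exact sol.exact_hit t ht hT

theorem mapClusterPt_sbar1 (ht : t ∈ sol.T) :
    MapClusterPt sbar1 (𝓝 t) (fun τ => sol.s τ 0) :=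
  ((sol.hit t ht ▸ sol.left_s t ht 0).mapClusterPt).mono nhdsWithin_le_nhds

theorem csInf_mem (hT : sol.T.Nonempty) : sInf sol.T ∈ sol.T := by
  have hnonneg : 0 ≤ sInf sol.T := le_csInf hT fun t ht => (sol.T_pos t ht).le
  by_contra hmem
  exact sol.s_ne_sbar1 hnonneg hmem <|
    (sol.continuousAt_s hnonneg hmem 0).eq_of_mem_closure_of_mapClusterPt
      (csInf_mem_closure hT sol.bddBelow_T) fun t ht => sol.mapClusterPt_sbar1 ht

theorem hasDerivAt_Vfun (hy0 : y 0 ≠ 0) (hyi : y i ≠ 0) (ht : 0 ≤ t) (hT : t ∉ sol.T) :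
    HasDerivAt (fun τ => Vfun y sIn i (sol.s τ)) 0 t := by
  have H := (((hasDerivAt_const t (sIn 0)).sub (sol.ode_s t ht hT 0)).const_mul (y 0)).sub
    (((hasDerivAt_const t (sIn i)).sub (sol.ode_s t ht hT i)).const_mul (y i))
  refine H.congr_deriv ?_
  field_simp
  ring

theorem Vfun_eq_of_mem_Ico (hy0 : y 0 ≠ 0) (hyi : y i ≠ 0) (hfirst : ∀ τ ∈ sol.T, t₀ ≤ τ) :
    ∀ t ∈ Ico 0 t₀, Vfun y sIn i (sol.s t) = Vfun y sIn i (sol.s 0) :=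
  eq_of_hasDerivAt_zero_of_mem_Ico fun t ht =>
    sol.hasDerivAt_Vfun hy0 hyi ht.1 fun hT => (hfirst t hT).not_gt ht.2

theorem Vfun_sLim_eq (hy0 : y 0 ≠ 0) (hyi : y i ≠ 0) (ht₀ : t₀ ∈ sol.T)
    (hfirst : ∀ τ ∈ sol.T, t₀ ≤ τ) :
    Vfun y sIn i (sol.sLim t₀) = Vfun y sIn i (sol.s 0) := by
  have hlim : Tendsto (fun τ => Vfun y sIn i (sol.s τ)) (𝓝[<] t₀)
      (𝓝 (Vfun y sIn i (sol.sLim t₀))) :=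
    ((tendsto_const_nhds.sub (sol.left_s t₀ ht₀ 0)).const_mul _).sub
      ((tendsto_const_nhds.sub (sol.left_s t₀ ht₀ i)).const_mul _)
  refine tendsto_nhds_unique hlim (tendsto_const_nhds.congr' ?_)
  filter_upwards [Ico_mem_nhdsLT (sol.T_pos t₀ ht₀)] with τ hτ
  exact (sol.Vfun_eq_of_mem_Ico hy0 hyi hfirst τ hτ).symm

theorem sLim_nonneg (hs : ∀ t, 0 ≤ t → ∀ i, 0 ≤ sol.s t i) (ht : t ∈ sol.T) (i : Fin n) :
    0 ≤ sol.sLim t i :=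
  ge_of_tendsto (sol.left_s t ht i) <| by
    filter_upwards [Ioo_mem_nhdsLT (sol.T_pos t ht)] with τ hτ using hs τ hτ.1.le i

theorem T_eq_empty_of_Vfun_lt_Vbar (hy0 : y 0 ≠ 0) (hyi : 0 < y i)
    (hs : ∀ t, 0 ≤ t → ∀ i, 0 ≤ sol.s t i) (hV : Vfun y sIn i (sol.s 0) < Vbar y sIn sbar1 i) :
    sol.T = ∅ := by
  by_contra hne
  have hfirst := sol.csInf_mem (nonempty_iff_ne_empty.2 hne)
  have hconserved := sol.Vfun_sLim_eq hy0 hyi.ne' hfirst fun τ hτ => csInf_le sol.bddBelow_T hτ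
  have hbound := Vbar_le_Vfun_of_eq_sbar1 (sIn := sIn) hyi.le (sol.hit _ hfirst)
    (sol.sLim_nonneg hs hfirst i)
  linarith

theorem sbar1_lt_s_of_T_eq_empty (hT : sol.T = ∅) (ht : 0 ≤ t) : sbar1 < sol.s t 0 := by
  have hnotT : ∀ τ, τ ∉ sol.T := fun τ => hT ▸ notMem_empty τ
  by_contra! hle
  have hcont : ContinuousOn (fun τ => sol.s τ 0) (Icc 0 t) := fun τ hτ =>
    (sol.continuousAt_s hτ.1 (hnotT τ) 0).continuousWithinAt
  obtain ⟨τ, hτ, hτeq⟩ := intermediate_value_Icc' ht hcont ⟨hle, sol.init.le⟩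
  exact sol.s_ne_sbar1 hτ.1 (hnotT τ) hτeq

end SCFSol

theorem scf_Omega0_no_impulses_general {n : ℕ} [NeZero n] (F : (Fin n → ℝ) → ℝ)
    (D : ℝ) (y : Fin n → ℝ) (hy : ∀ i, 0 < y i)
    (sIn : Fin n → ℝ) (r : ℝ) (sbar1 : ℝ)
    (sol : SCFSol n F D y r sIn sbar1)
    (hcone : ∀ t : ℝ, 0 ≤ t → (∀ i, 0 < sol.s t i) ∧ 0 < sol.x t)
    (h0 : sol.s 0 ∈ Omega0 y sIn sbar1) :
    sol.T = ∅ ∧ ∀ t : ℝ, 0 ≤ t → sbar1 < sol.s t 0 := by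
  obtain ⟨-, -, i, -, hVi⟩ := h0
  have hT : sol.T = ∅ := sol.T_eq_empty_of_Vfun_lt_Vbar (hy 0).ne' (hy i)
    (fun t ht j => ((hcone t ht).1 j).le) hVi
  exact ⟨hT, fun t ht => sol.sbar1_lt_s_of_T_eq_empty hT ht⟩

/-- Lemma 3.3: if a solution of the impulsive SCF model in the open
positive cone starts with `s(0) ∈ Ω₀`, then no impulses occur: `s₁(t) > s̄₁` for all
`t ≥ 0`. -/
theorem scf_Omega0_no_impulses {n : ℕ} [NeZero n] (F : (Fin n → ℝ) → ℝ) (hF : FHyp F)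
    (D : ℝ) (hD : 0 < D) (y : Fin n → ℝ) (hy : ∀ i, 0 < y i)
    (sIn : Fin n → ℝ) (hsIn : ∀ i, 0 < sIn i)
    (r : ℝ) (hr : r ∈ Set.Ioo (0:ℝ) 1)
    (sbar1 : ℝ) (hsbar1 : 0 < sbar1) (hsbar1' : sbar1 < sIn 0)
    (sol : SCFSol n F D y r sIn sbar1)
    (hcone : ∀ t : ℝ, 0 ≤ t → (∀ i, 0 < sol.s t i) ∧ 0 < sol.x t)
    (h0 : sol.s 0 ∈ Omega0 y sIn sbar1) :
    sol.T = ∅ ∧ ∀ t : ℝ, 0 ≤ t → sbar1 < sol.s t 0 :=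
  scf_Omega0_no_impulses_general F D y hy sIn r sbar1 sol hcone h0

end
end

section
/- Regard μ as a function of r ∈ [0,1], where μ(r) = r y₁(s₁^in − s̄₁) ∫₀¹ (1 − D / F(φ_ν(ŝ⁺(r)))) dν. If μ(1) > 0, then there exists a unique r_* ∈ [0,1) such that μ(r) > 0 for all r ∈ (r_*, 1] and μ(r) ≤ 0 for all r ∈ [0, r_*]. -/
open Filter Set Topology

noncomputable section

/-!
Along the cycle started at `ŝ⁺(r)` the substrate runs back along the segment `ŝ⁺`
itself, `φ_ν(ŝ⁺(r)) = ŝ⁺(r(1 - ν))`, so `μ(r) = r c G(r)` with `c = y₁(s₁ⁱⁿ - s̄₁) ≥ 0`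
and `G(r) = ∫₀¹ (1 - D / F(ŝ⁺(r(1 - ν)))) dν`. The path `ŝ⁺` is increasing and, by
`sⁱⁿ ∈ Ω₁`, stays in the open positive cone, where `F` is positive, continuous and
monotone; hence `G` is continuous and nondecreasing. So `{r ∈ [0,1] | μ(r) ≤ 0}` is a
closed initial segment `[0, r⋆]`, and `μ(1) > 0` forces `r⋆ < 1`.
-/

theorem FHyp.continuousOn {n : ℕ} {F : (Fin n → ℝ) → ℝ} (hF : FHyp F) :
    ContinuousOn F {s | ∀ i, 0 ≤ s i} :=
  let ⟨_, hK⟩ := hF.1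
  hK.continuousOn

theorem FHyp.monotoneOn {n : ℕ} {F : (Fin n → ℝ) → ℝ} (hF : FHyp F) :
    MonotoneOn F {s | ∀ i, 0 < s i} := by
  classical
  intro a ha b hb hab
  -- raise the coordinates of `a` to those of `b` one at a time
  have key : ∀ t : Finset (Fin n), F a ≤ F (t.piecewise b a) := by
    intro t
    induction t using Finset.induction_on with
    | empty => simp
    | insert j t hj ih =>
      set s := t.piecewise b a
      have hs : ∀ i, 0 < s i := fun i => t.piecewise_cases b a (0 < ·) (hb i) (ha i)
      have hsj : s j = a j := Finset.piecewise_eq_of_notMem _ _ _ hj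
      rw [Finset.piecewise_insert]
      rcases (hab j).eq_or_lt with heq | hlt
      · rwa [← heq, ← hsj, Function.update_eq_self]
      · calc F a ≤ F s := ih
          _ ≤ F (Function.update s j (s j + (b j - a j))) :=
            (hF.2.2.2 s hs j _ (sub_pos.2 hlt)).le
          _ = F (Function.update s j (b j)) := by rw [hsj, add_sub_cancel]
  simpa using key Finset.univ

section ShatP

variable {n : ℕ} [NeZero n] {y sIn : Fin n → ℝ} {sbar1 : ℝ}

theorem continuous_shatP : Continuous (shatP y sIn sbar1) := by
  unfold shatP
  fun_prop

theorem monotone_shatP (hy : ∀ i, 0 ≤ y i) (hle : sbar1 ≤ sIn 0) :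
    Monotone (shatP y sIn sbar1) := by
  intro r r' hrr' i
  have hc : 0 ≤ y 0 * (sIn 0 - sbar1) * (1 / y i) :=
    mul_nonneg (mul_nonneg (hy 0) (sub_nonneg.2 hle)) (one_div_nonneg.2 (hy i))
  simp only [shatP]
  nlinarith

theorem shatP_zero_pos (hy : ∀ i, 0 < y i) (hsbar1 : 0 < sbar1)
    (hOm : sIn ∈ Omega1 y sIn sbar1) (i : Fin n) : 0 < shatP y sIn sbar1 0 i := by
  have hyi := hy i
  rcases eq_or_ne i 0 with rfl | hi
  · have : shatP y sIn sbar1 0 0 = sbar1 := by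
      simp only [shatP]
      field_simp
      ring
    rwa [this]
  · have h := hOm.2.2 i hi
    simp only [Vbar, Vfun, sub_self, mul_zero] at h
    simp only [shatP, sub_zero, one_mul, mul_one_div, sub_pos, div_lt_iff₀ hyi]
    linarith

theorem shatP_pos (hy : ∀ i, 0 < y i) (hsbar1 : 0 < sbar1)
    (hOm : sIn ∈ Omega1 y sIn sbar1) {t : ℝ} (ht : 0 ≤ t) (i : Fin n) :
    0 < shatP y sIn sbar1 t i :=
  (shatP_zero_pos hy hsbar1 hOm i).trans_le
    (monotone_shatP (fun i => (hy i).le) hOm.2.1 ht i)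

theorem phiNu_shatP (hy0 : y 0 ≠ 0) (r ν : ℝ) :
    phiNu y sbar1 ν (shatP y sIn sbar1 r) = shatP y sIn sbar1 (r * (1 - ν)) := by
  funext i
  simp only [phiNu, shatP]
  field_simp
  ring

end ShatP

theorem existsUnique_sign_threshold {f G : ℝ → ℝ}
    (hf : ∀ r ∈ Icc (0:ℝ) 1, f r = r * G r)
    (hcont : ContinuousOn G (Icc 0 1)) (hmono : MonotoneOn G (Icc 0 1)) (h1 : 0 < G 1) :
    ∃! rstar : ℝ, rstar ∈ Ico (0:ℝ) 1 ∧ (∀ r ∈ Ioc rstar 1, 0 < f r) ∧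
      (∀ r ∈ Icc (0:ℝ) rstar, f r ≤ 0) := by
  have hI0 : (0:ℝ) ∈ Icc (0:ℝ) 1 := left_mem_Icc.2 zero_le_one
  have hI1 : (1:ℝ) ∈ Icc (0:ℝ) 1 := right_mem_Icc.2 zero_le_one
  set S := Icc (0:ℝ) 1 ∩ f ⁻¹' Iic 0
  have hS0 : (0:ℝ) ∈ S := ⟨hI0, by simp [hf 0 hI0]⟩
  have hSbdd : BddAbove S := bddAbove_Icc.mono inter_subset_left
  have hSclosed : IsClosed S :=
    ((continuousOn_id.mul hcont).congr hf).preimage_isClosed_of_isClosed isClosed_Icc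
      isClosed_Iic
  set rstar := sSup S
  have hmem : rstar ∈ S := hSclosed.csSup_mem ⟨0, hS0⟩ hSbdd
  have hlt1 : rstar < 1 := by
    refine hmem.1.2.lt_of_ne fun h => ?_
    have := hmem.2
    simp only [h, mem_preimage, mem_Iic, hf 1 hI1, one_mul] at this
    linarith
  have hpos : ∀ r ∈ Ioc rstar 1, 0 < f r := fun r hr =>
    not_le.1 fun hle => hr.1.not_ge (le_csSup hSbdd ⟨⟨hmem.1.1.trans hr.1.le, hr.2⟩, hle⟩)
  have hnonpos : ∀ r ∈ Icc (0:ℝ) rstar, f r ≤ 0 := by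
    rintro r ⟨hr0, hrs⟩
    have hrI : r ∈ Icc (0:ℝ) 1 := ⟨hr0, hrs.trans hlt1.le⟩
    rcases hr0.eq_or_lt with rfl | hr0
    · simp [hf 0 hI0]
    have hGs : G rstar ≤ 0 := by
      have := hmem.2
      simp only [mem_preimage, mem_Iic, hf rstar hmem.1] at this
      exact nonpos_of_mul_nonpos_right this (hr0.trans_le hrs)
    rw [hf r hrI]
    exact mul_nonpos_of_nonneg_of_nonpos hr0.le ((hmono hrI hmem.1 hrs).trans hGs)
  refine ⟨rstar, ⟨⟨hmem.1.1, hlt1⟩, hpos, hnonpos⟩, ?_⟩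
  rintro a ⟨ha, hapos, hanonpos⟩
  refine le_antisymm (not_lt.1 fun h => ?_) (not_lt.1 fun h => ?_)
  · exact (hpos a ⟨h, ha.2.le⟩).not_ge (hanonpos a ⟨ha.1, le_rfl⟩)
  · exact (hapos rstar ⟨h, hlt1.le⟩).not_ge (hnonpos rstar ⟨hmem.1.1, le_rfl⟩)

section MeanNetGrowth

variable {h : ℝ → ℝ}

def meanNetGrowth (D : ℝ) (h : ℝ → ℝ) (r : ℝ) : ℝ :=
  ∫ ν in (0:ℝ)..1, (1 - D / h (r * (1 - ν)))

theorem continuous_meanNetGrowth (D : ℝ) (hcont : Continuous h) (hpos : ∀ t, 0 < h t) :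
    Continuous (meanNetGrowth D h) :=
  intervalIntegral.continuous_parametric_intervalIntegral_of_continuous'
    (continuous_const.sub (continuous_const.div (hcont.comp (by fun_prop))
      fun _ => (hpos _).ne')) 0 1

theorem monotone_meanNetGrowth {D : ℝ} (hD : 0 ≤ D) (hcont : Continuous h)
    (hpos : ∀ t, 0 < h t) (hmono : Monotone h) : Monotone (meanNetGrowth D h) := by
  intro r r' hrr'
  have hint : ∀ r,
      IntervalIntegrable (fun ν => 1 - D / h (r * (1 - ν))) MeasureTheory.volume 0 1 := fun r =>
    (continuous_const.sub (continuous_const.div (hcont.comp (by fun_prop))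
      fun _ => (hpos _).ne')).intervalIntegrable 0 1
  refine intervalIntegral.integral_mono_on zero_le_one (hint r) (hint r') fun ν hν => ?_
  have : h (r * (1 - ν)) ≤ h (r' * (1 - ν)) :=
    hmono (mul_le_mul_of_nonneg_right hrr' (sub_nonneg.2 hν.2))
  linarith [div_le_div_of_nonneg_left hD (hpos _) this]

end MeanNetGrowth

theorem muFun_eq_mul_meanNetGrowth {n : ℕ} [NeZero n] (F : (Fin n → ℝ) → ℝ) (D : ℝ)
    {y sIn : Fin n → ℝ} {sbar1 r : ℝ} (hy0 : y 0 ≠ 0) (hr : r ∈ Icc (0:ℝ) 1) :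
    muFun F D y sIn sbar1 r = r * (y 0 * (sIn 0 - sbar1) *
      meanNetGrowth D (fun t => F (shatP y sIn sbar1 (max 0 t))) r) := by
  have hclamp : ∫ ν in (0:ℝ)..1, (1 - D / F (shatP y sIn sbar1 (r * (1 - ν)))) =
      meanNetGrowth D (fun t => F (shatP y sIn sbar1 (max 0 t))) r := by
    refine intervalIntegral.integral_congr fun ν hν => ?_
    rw [uIcc_of_le zero_le_one] at hν
    simp only [max_eq_right (mul_nonneg hr.1 (sub_nonneg.2 hν.2))]
  unfold muFun
  simp only [phiNu_shatP hy0, hclamp]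
  ring

theorem scf_rstar_exists_unique_general {n : ℕ} [NeZero n] (F : (Fin n → ℝ) → ℝ) (hF : FHyp F)
    (D : ℝ) (hD : 0 < D) (y : Fin n → ℝ) (hy : ∀ i, 0 < y i)
    (sIn : Fin n → ℝ)
    (sbar1 : ℝ) (hsbar1 : 0 < sbar1)
    (hOm : sIn ∈ Omega1 y sIn sbar1)
    (hmu1 : 0 < muFun F D y sIn sbar1 1) :
    ∃! rstar : ℝ, rstar ∈ Set.Ico (0:ℝ) 1 ∧
      (∀ r' ∈ Set.Ioc rstar 1, 0 < muFun F D y sIn sbar1 r') ∧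
      (∀ r' ∈ Set.Icc (0:ℝ) rstar, muFun F D y sIn sbar1 r' ≤ 0) := by
  -- uptake along `ŝ⁺`, clamped at `r = 0` so that it is positive and continuous on all of `ℝ`
  set h : ℝ → ℝ := fun t => F (shatP y sIn sbar1 (max 0 t))
  have hpath : ∀ t, ∀ i, 0 < shatP y sIn sbar1 (max 0 t) i :=
    fun t => shatP_pos hy hsbar1 hOm (le_max_left 0 t)
  have hh_pos : ∀ t, 0 < h t := fun t => hF.2.2.1 _ (hpath t)
  have hh_cont : Continuous h :=
    hF.continuousOn.comp_continuous (continuous_shatP.comp (continuous_const.max continuous_id))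
      fun t i => (hpath t i).le
  have hh_mono : Monotone h := fun t t' htt' =>
    hF.monotoneOn (hpath t) (hpath t')
      (monotone_shatP (fun i => (hy i).le) hOm.2.1 (max_le_max le_rfl htt'))
  have hc : 0 ≤ y 0 * (sIn 0 - sbar1) := mul_nonneg (hy 0).le (sub_nonneg.2 hOm.2.1)
  have hmu := fun r (hr : r ∈ Icc (0:ℝ) 1) =>
    muFun_eq_mul_meanNetGrowth F D (sIn := sIn) (sbar1 := sbar1) (hy 0).ne' hr
  refine existsUnique_sign_threshold hmu
    ((continuous_meanNetGrowth D hh_cont hh_pos).const_mul _).continuousOn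
    (((monotone_meanNetGrowth hD.le hh_cont hh_pos hh_mono).const_mul hc).monotoneOn _) ?_
  simpa [hmu 1 (right_mem_Icc.2 zero_le_one)] using hmu1

/-- Proposition 3.8: regarding `μ` as a function of `r ∈ [0,1]`, if
`μ(1) > 0` then there is a unique `r⋆ ∈ [0,1)` such that `μ(r) > 0` on `(r⋆, 1]` and
`μ(r) ≤ 0` on `[0, r⋆]`. -/
theorem scf_rstar_exists_unique {n : ℕ} [NeZero n] (F : (Fin n → ℝ) → ℝ) (hF : FHyp F)
    (D : ℝ) (hD : 0 < D) (y : Fin n → ℝ) (hy : ∀ i, 0 < y i)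
    (sIn : Fin n → ℝ) (hsIn : ∀ i, 0 < sIn i)
    (sbar1 : ℝ) (hsbar1 : 0 < sbar1) (hsbar1' : sbar1 < sIn 0)
    (hOm : sIn ∈ Omega1 y sIn sbar1)
    (hmu1 : 0 < muFun F D y sIn sbar1 1) :
    ∃! rstar : ℝ, rstar ∈ Set.Ico (0:ℝ) 1 ∧
      (∀ r' ∈ Set.Ioc rstar 1, 0 < muFun F D y sIn sbar1 r') ∧
      (∀ r' ∈ Set.Icc (0:ℝ) rstar, muFun F D y sIn sbar1 r' ≤ 0) :=
  scf_rstar_exists_unique_general F hF D hD y hy sIn sbar1 hsbar1 hOm hmu1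

end
end

section
/- Assume s^in ∈ Ω₁, r ∈ (0,1), and μ(r) > 0. Then there exists ρ > 0 such that Γ_ρ⁺ := {s ∈ Γ⁺ : V_i(s) > −ρ for all i = 2,…,n} is a subset of G⁺ := {s ∈ Γ⁺ ∩ Ω₁ : I(s) > 0}; that is, every point of Γ⁺ at which all V_i exceed −ρ lies in Ω₁ and has strictly positive net biomass change I over one cycle. -/
open Filter Set Topology

noncomputable section

theorem FHyp.sub_mul_norm_le {n : ℕ} {F : (Fin n → ℝ) → ℝ} (hF : FHyp F) {K : NNReal}
    (hK : LipschitzOnWith K F {s | ∀ i, 0 ≤ s i}) {p q t : Fin n → ℝ} (hp : ∀ i, 0 ≤ p i)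
    (hpt : ∀ i, 0 < p i - t i) (hq : p - t ≤ q) : F p - K * ‖t‖ ≤ F q := by
  have hlip : F p - F (p - t) ≤ K * ‖t‖ := by
    rw [← dist_self_sub_right p t]
    exact (le_abs_self _).trans (hK.dist_le_mul p hp (p - t) fun i => (hpt i).le)
  have hmono : F (p - t) ≤ F q :=
    hF.monotoneOn hpt (fun i => (hpt i).trans_le (hq i)) hq
  linarith

theorem div_sub_div_le_of_sub_le {D m ε a b : ℝ} (hD : 0 ≤ D) (hm : 0 < m) (hmb : m ≤ b)
    (hε : 0 ≤ ε) (hεm : ε ≤ m / 2) (hab : b - ε ≤ a) :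
    D / a - D / b ≤ 2 * D * ε / m ^ 2 := by
  have ha : m / 2 ≤ a := by linarith
  have hb : 0 < b := hm.trans_le hmb
  have ha' : 0 < a := by linarith
  calc D / a - D / b = D * (b - a) / (a * b) := by field_simp
    _ ≤ D * ε / (m / 2 * m) := by
        gcongr
        linarith
    _ = 2 * D * ε / m ^ 2 := by field_simp

theorem integral_one_sub_div_sub_le {f g : ℝ → ℝ} {a b D m ε : ℝ} (hab : a ≤ b)
    (hf : ContinuousOn f (Set.Icc a b)) (hg : ContinuousOn g (Set.Icc a b)) (hD : 0 ≤ D)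
    (hm : 0 < m) (hε : 0 ≤ ε) (hεm : ε ≤ m / 2) (hmf : ∀ x ∈ Set.Icc a b, m ≤ f x)
    (hfg : ∀ x ∈ Set.Icc a b, f x - ε ≤ g x) :
    (∫ x in a..b, (1 - D / f x)) - (b - a) * (2 * D * ε / m ^ 2) ≤
      ∫ x in a..b, (1 - D / g x) := by
  have hint : ∀ h : ℝ → ℝ, ContinuousOn h (Set.Icc a b) → (∀ x ∈ Set.Icc a b, 0 < h x) →
      IntervalIntegrable (fun x => 1 - D / h x) MeasureTheory.volume a b := fun h hc hpos =>
    ContinuousOn.intervalIntegrable_of_Icc hab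
      (continuousOn_const.sub (continuousOn_const.div hc fun x hx => (hpos x hx).ne'))
  have hfpos : ∀ x ∈ Set.Icc a b, 0 < f x := fun x hx => hm.trans_le (hmf x hx)
  have hgpos : ∀ x ∈ Set.Icc a b, 0 < g x := fun x hx => by linarith [hmf x hx, hfg x hx]
  rw [← smul_eq_mul, ← intervalIntegral.integral_const,
    ← intervalIntegral.integral_sub (hint f hf hfpos) intervalIntegrable_const]
  refine intervalIntegral.integral_mono_on hab
    ((hint f hf hfpos).sub intervalIntegrable_const) (hint g hg hgpos) fun x hx => ?_
  linarith [div_sub_div_le_of_sub_le hD hm (hmf x hx) hε hεm (hfg x hx)]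

section Chemostat

variable {n : ℕ} [NeZero n] {y sIn : Fin n → ℝ} {sbar1 r : ℝ}

theorem continuous_phiNu (y : Fin n → ℝ) (sbar1 : ℝ) (s : Fin n → ℝ) :
    Continuous fun ν => phiNu y sbar1 ν s := by
  unfold phiNu
  fun_prop

theorem continuousOn_F_phiNu {F : (Fin n → ℝ) → ℝ} {K : NNReal}
    (hK : LipschitzOnWith K F {s | ∀ i, 0 ≤ s i}) {s : Fin n → ℝ} {S : Set ℝ}
    (hs : ∀ ν ∈ S, ∀ i, 0 ≤ phiNu y sbar1 ν s i) :
    ContinuousOn (fun ν => F (phiNu y sbar1 ν s)) S :=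
  hK.continuousOn.comp (continuous_phiNu y sbar1 s).continuousOn hs

theorem antitone_phiNu (hy : ∀ i, 0 < y i) {s : Fin n → ℝ} (hs : sbar1 ≤ s 0) :
    Antitone fun ν => phiNu y sbar1 ν s := fun ν μ hνμ i => by
  have : 0 ≤ y 0 * (s 0 - sbar1) * (1 / y i) :=
    mul_nonneg (mul_nonneg (hy 0).le (by linarith)) (by simp [(hy i).le])
  simp only [phiNu]
  nlinarith

theorem phiNu_sub_phiNu {s s' : Fin n → ℝ} (h : s 0 = s' 0) (ν : ℝ) (i : Fin n) :
    phiNu y sbar1 ν s i - phiNu y sbar1 ν s' i = s i - s' i := by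
  simp only [phiNu, h]
  ring

theorem Vfun_sub_Vfun {s s' : Fin n → ℝ} (h : s 0 = s' 0) (i : Fin n) :
    Vfun y sIn i s - Vfun y sIn i s' = y i * (s i - s' i) := by
  simp only [Vfun, h]
  ring

theorem shatP_zero (hy0 : y 0 ≠ 0) :
    shatP y sIn sbar1 r 0 = r * sIn 0 + (1 - r) * sbar1 := by
  simp only [shatP]
  field_simp
  ring

theorem le_shatP_zero (hy0 : y 0 ≠ 0) (hr : 0 ≤ r) (hsbar1 : sbar1 ≤ sIn 0) :
    sbar1 ≤ shatP y sIn sbar1 r 0 := by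
  rw [shatP_zero hy0]
  nlinarith

theorem Vfun_shatP (hy : ∀ i, 0 < y i) (i : Fin n) :
    Vfun y sIn i (shatP y sIn sbar1 r) = 0 := by
  rw [Vfun, shatP_zero (hy 0).ne']
  simp only [shatP]
  field_simp [(hy i).ne']
  ring

theorem mul_phiNu_one_shatP (hy : ∀ i, 0 < y i) (i : Fin n) :
    y i * phiNu y sbar1 1 (shatP y sIn sbar1 r) i = -Vbar y sIn sbar1 i := by
  simp only [phiNu, shatP_zero (hy 0).ne', Vbar]
  simp only [shatP]
  field_simp [(hy i).ne']
  ring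

theorem Vbar_neg (hy0 : 0 < y 0) (hsbar1 : 0 < sbar1) (hOm : sIn ∈ Omega1 y sIn sbar1)
    (i : Fin n) : Vbar y sIn sbar1 i < 0 := by
  by_cases hi : i = 0
  · subst hi
    simp only [Vbar]
    nlinarith
  · simpa [Vfun] using hOm.2.2 i hi

theorem sub_div_le_of_mem_GammaRho (hy : ∀ i, 0 < y i) {ρ : ℝ} (hρ : 0 ≤ ρ)
    {s : Fin n → ℝ} (hs : s ∈ GammaRho y sIn sbar1 r ρ) (i : Fin n) :
    shatP y sIn sbar1 r i - ρ / y i ≤ s i := by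
  have h0 : s 0 = shatP y sIn sbar1 r 0 := by rw [hs.2.1, shatP_zero (hy 0).ne']
  by_cases hi : i = 0
  · subst hi
    linarith [div_nonneg hρ (hy 0).le]
  · have hV := Vfun_sub_Vfun (y := y) (sIn := sIn) h0 i
    rw [Vfun_shatP hy, sub_zero] at hV
    have hdiv : -ρ / y i ≤ s i - shatP y sIn sbar1 r i := by
      rw [div_le_iff₀ (hy i)]
      linarith [hs.2.2 i hi]
    linarith [neg_div (y i) ρ]

theorem mem_Omega1_of_mem_GammaRho (hr : 0 ≤ r) (hsbar1 : sbar1 ≤ sIn 0) {ρ : ℝ}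
    (hρ : ∀ i, ρ < -Vbar y sIn sbar1 i) {s : Fin n → ℝ} (hs : s ∈ GammaRho y sIn sbar1 r ρ) :
    s ∈ Omega1 y sIn sbar1 :=
  ⟨hs.1, by nlinarith [hs.2.1], fun i hi => by linarith [hρ i, hs.2.2 i hi]⟩

theorem neg_Vbar_le_mul_phiNu_shatP (hy : ∀ i, 0 < y i) (hr : 0 ≤ r)
    (hsbar1 : sbar1 ≤ sIn 0) {ν : ℝ} (hν : ν ≤ 1) (i : Fin n) :
    -Vbar y sIn sbar1 i ≤ y i * phiNu y sbar1 ν (shatP y sIn sbar1 r) i := by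
  rw [← mul_phiNu_one_shatP hy]
  exact mul_le_mul_of_nonneg_left
    (antitone_phiNu hy (le_shatP_zero (hy 0).ne' hr hsbar1) hν i) (hy i).le

theorem phiNu_shatP_pos (hy : ∀ i, 0 < y i) (hsbar1 : 0 < sbar1)
    (hOm : sIn ∈ Omega1 y sIn sbar1) (hr : 0 ≤ r) {ν : ℝ} (hν : ν ≤ 1) (i : Fin n) :
    0 < phiNu y sbar1 ν (shatP y sIn sbar1 r) i :=
  pos_of_mul_pos_right ((neg_pos.2 (Vbar_neg (hy 0) hsbar1 hOm i)).trans_le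
    (neg_Vbar_le_mul_phiNu_shatP hy hr hOm.2.1 hν i)) (hy i).le

theorem FHyp.F_phiNu_one_shatP_le {F : (Fin n → ℝ) → ℝ} (hF : FHyp F) (hy : ∀ i, 0 < y i)
    (hsbar1 : 0 < sbar1) (hOm : sIn ∈ Omega1 y sIn sbar1) (hr : 0 ≤ r) {ν : ℝ} (hν : ν ≤ 1) :
    F (phiNu y sbar1 1 (shatP y sIn sbar1 r)) ≤ F (phiNu y sbar1 ν (shatP y sIn sbar1 r)) :=
  hF.monotoneOn (phiNu_shatP_pos hy hsbar1 hOm hr le_rfl) (phiNu_shatP_pos hy hsbar1 hOm hr hν)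
    (antitone_phiNu hy (le_shatP_zero (hy 0).ne' hr hOm.2.1) hν)

theorem FHyp.F_phiNu_shatP_sub_le_of_mem_GammaRho {F : (Fin n → ℝ) → ℝ} (hF : FHyp F)
    {K : NNReal} (hK : LipschitzOnWith K F {s | ∀ i, 0 ≤ s i}) (hy : ∀ i, 0 < y i)
    (hr : 0 ≤ r) (hsbar1 : sbar1 ≤ sIn 0) {ρ : ℝ} (hρ0 : 0 ≤ ρ)
    (hρ : ∀ i, ρ < -Vbar y sIn sbar1 i) {s : Fin n → ℝ} (hs : s ∈ GammaRho y sIn sbar1 r ρ)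
    {ν : ℝ} (hν : ν ≤ 1) :
    (∀ i, 0 < phiNu y sbar1 ν s i) ∧
      F (phiNu y sbar1 ν (shatP y sIn sbar1 r)) - K * ‖fun i => ρ / y i‖ ≤
        F (phiNu y sbar1 ν s) := by
  set sh := shatP y sIn sbar1 r
  have hpt : ∀ i, 0 < phiNu y sbar1 ν sh i - ρ / y i := fun i => by
    rw [sub_pos, div_lt_iff₀ (hy i)]
    linarith [hρ i, neg_Vbar_le_mul_phiNu_shatP hy hr hsbar1 hν i]
  have hq : (phiNu y sbar1 ν sh - fun i => ρ / y i) ≤ phiNu y sbar1 ν s := fun i => by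
    have h0 : s 0 = sh 0 := hs.2.1.trans (shatP_zero (hy 0).ne').symm
    have hφ := phiNu_sub_phiNu (y := y) (sbar1 := sbar1) h0 ν i
    simp only [Pi.sub_apply]
    linarith [sub_div_le_of_mem_GammaRho hy hρ0 hs i]
  refine ⟨fun i => (hpt i).trans_le (hq i), hF.sub_mul_norm_le hK ?_ hpt hq⟩
  exact fun i => by linarith [hpt i, div_nonneg hρ0 (hy i).le]

end Chemostat

theorem scf_GammaRho_subset_Gplus_general {n : ℕ} [NeZero n] (F : (Fin n → ℝ) → ℝ) (hF : FHyp F)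
    (D : ℝ) (hD : 0 < D) (y : Fin n → ℝ) (hy : ∀ i, 0 < y i)
    (sIn : Fin n → ℝ)
    (r : ℝ) (hr : r ∈ Set.Ioo (0:ℝ) 1)
    (sbar1 : ℝ) (hsbar1 : 0 < sbar1) (hsbar1' : sbar1 < sIn 0)
    (hOm : sIn ∈ Omega1 y sIn sbar1)
    (hmu : 0 < muFun F D y sIn sbar1 r) :
    ∃ ρ : ℝ, 0 < ρ ∧ ∀ sv : Fin n → ℝ, sv ∈ GammaRho y sIn sbar1 r ρ →
      sv ∈ Omega1 y sIn sbar1 ∧ 0 < Ifun F D y sbar1 sv := by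
  obtain ⟨K, hK⟩ := hF.1
  set sh := shatP y sIn sbar1 r
  set J := ∫ ν in (0:ℝ)..1, (1 - D / F (phiNu y sbar1 ν sh))
  set m := F (phiNu y sbar1 1 sh)
  have hm : 0 < m := hF.2.2.1 _ (phiNu_shatP_pos hy hsbar1 hOm hr.1.le le_rfl)
  have hJ : 0 < J := pos_of_mul_pos_right hmu (mul_nonneg (hy 0).le (by nlinarith [hr.1]))
  obtain ⟨ε, hε0, hεm, hεJ⟩ : ∃ ε > 0, ε < m / 2 ∧ 2 * D * ε / m ^ 2 < J :=
    ((eventually_lt_nhds (half_pos hm)).and (ContinuousAt.eventually_lt (by fun_prop)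
      continuousAt_const (by simpa using hJ))).exists_gt
  obtain ⟨ρ, hρ0, hρVbar, hρε⟩ : ∃ ρ > 0, (∀ i, ρ < -Vbar y sIn sbar1 i) ∧
      K * ‖fun i => ρ / y i‖ < ε :=
    ((eventually_all.2 fun i => eventually_lt_nhds (neg_pos.2 (Vbar_neg (hy 0) hsbar1 hOm i))).and
      (ContinuousAt.eventually_lt (by fun_prop) continuousAt_const (by simpa using hε0))).exists_gt
  refine ⟨ρ, hρ0, fun s hs => ⟨mem_Omega1_of_mem_GammaRho hr.1.le hsbar1'.le hρVbar hs, ?_⟩⟩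
  have hshift := fun ν (hν : ν ∈ Set.Icc (0:ℝ) 1) =>
    hF.F_phiNu_shatP_sub_le_of_mem_GammaRho hK hy hr.1.le hsbar1'.le hρ0.le hρVbar hs hν.2
  have hint := integral_one_sub_div_sub_le zero_le_one
    (continuousOn_F_phiNu hK fun ν hν i => (phiNu_shatP_pos hy hsbar1 hOm hr.1.le hν.2 i).le)
    (continuousOn_F_phiNu hK fun ν hν i => ((hshift ν hν).1 i).le) hD.le hm hε0.le hεm.le
    (fun ν hν => hF.F_phiNu_one_shatP_le hy hsbar1 hOm hr.1.le hν.2)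
    (fun ν hν => (hshift ν hν).2.trans' (by linarith))
  rw [Ifun, hs.2.1]
  exact mul_pos (mul_pos (hy 0) (by nlinarith [hr.1])) (by linarith)

/-- Lemma 3.11: if `sⁱⁿ ∈ Ω₁`, `r ∈ (0,1)` and `μ(r) > 0`, then there
is `ρ > 0` such that every `s ∈ Γ⁺` with `V_i(s) > -ρ` for all `i = 2,…,n` lies in `Ω₁`
and has strictly positive net biomass change `I(s)` over one cycle, i.e. `Γ_ρ⁺ ⊆ G⁺`. -/
theorem scf_GammaRho_subset_Gplus {n : ℕ} [NeZero n] (F : (Fin n → ℝ) → ℝ) (hF : FHyp F)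
    (D : ℝ) (hD : 0 < D) (y : Fin n → ℝ) (hy : ∀ i, 0 < y i)
    (sIn : Fin n → ℝ) (hsIn : ∀ i, 0 < sIn i)
    (r : ℝ) (hr : r ∈ Set.Ioo (0:ℝ) 1)
    (sbar1 : ℝ) (hsbar1 : 0 < sbar1) (hsbar1' : sbar1 < sIn 0)
    (hOm : sIn ∈ Omega1 y sIn sbar1)
    (hmu : 0 < muFun F D y sIn sbar1 r) :
    ∃ ρ : ℝ, 0 < ρ ∧ ∀ sv : Fin n → ℝ, sv ∈ GammaRho y sIn sbar1 r ρ →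
      sv ∈ Omega1 y sIn sbar1 ∧ 0 < Ifun F D y sbar1 sv :=
  scf_GammaRho_subset_Gplus_general F hF D hD y hy sIn r hr sbar1 hsbar1 hsbar1' hOm hmu

end
end
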